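/- arXiv:1902.06235 — 3 statements merged into one kernel-verified Lean document; each statement's English description precedes it below -/
import Mathlib

section
/- Assume R is positive definite and Q is positive semidefinite. The CDRE quantities with zero terminal data depend only on the time to go: for all horizons N, N′ ≥ d, all modes i, all 0 ≤ r ≤ d−1, and all times t, t′ with N − t = N′ − t′, one has P_i(t, N) = P_i(t′, N′) and P_i^0(t, N) = P_i^0(t′, N′) whenever −1 ≤ t ≤ N and −1 ≤ t′ ≤ N′, and W_i(t, N) = W_i(t′, N′) and T_i^r(t, N) = T_i^r(t′, N′) whenever −d ≤ t ≤ N−d and −d ≤ t′ ≤ N′−d. -/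
open MeasureTheory Filter Matrix Topology
open scoped ENNReal

noncomputable section

/-- The data of a Markov jump linear system with input delay:
dimensions `n, m`, number of modes `L`, delay `d`, mode matrices `A, B`,
symmetric weight matrices `Q, R`, and a row-stochastic transition matrix `Pr`. -/
structure MJParams where
  n : ℕ
  m : ℕ
  L : ℕ
  d : ℕ
  hn : 0 < n
  hm : 0 < m
  hL : 0 < L
  hd : 0 < d
  A : Fin L → Matrix (Fin n) (Fin n) ℝ
  B : Fin L → Matrix (Fin n) (Fin m) ℝ
  Q : Matrix (Fin n) (Fin n) ℝ
  R : Matrix (Fin m) (Fin m) ℝ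
  Pr : Matrix (Fin L) (Fin L) ℝ
  hQsymm : Q.IsSymm
  hRsymm : R.IsSymm
  hPrnonneg : ∀ i j, 0 ≤ Pr i j
  hPrrow : ∀ i, ∑ j, Pr i j = 1

namespace MJParams

variable (S : MJParams)

/-- Probability weight `λ_{i j₁} λ_{j₁ j₂} ⋯ λ_{j_{s-1} j_s}` of the mode path
`j = (j₁, …, j_s)` (0-indexed) started from mode `i`. -/
def pw (i : Fin S.L) {s : ℕ} (j : Fin s → Fin S.L) : ℝ :=
  ∏ t : Fin s,
    S.Pr (if _ : (t : ℕ) = 0 then i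
          else j ⟨(t : ℕ) - 1, lt_of_le_of_lt (Nat.sub_le _ _) t.isLt⟩) (j t)

/-- `E_i^{(s)}[f]`: expectation of a (matrix-valued) function of mode paths of length `s`
started from mode `i`. -/
def expect (i : Fin S.L) (s : ℕ) {α : Type*} [AddCommMonoid α] [Module ℝ α]
    (f : (Fin s → Fin S.L) → α) : α :=
  ∑ j : Fin s → Fin S.L, S.pw i j • f j

def dflt : Fin S.L := ⟨0, S.hL⟩

/-- Entry `q` (0-indexed) of a mode path, i.e. `j_{q+1}` in 1-indexed notation. -/
def pget {s : ℕ} (j : Fin s → Fin S.L) (q : ℕ) : Fin S.L :=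
  if h : q < s then j ⟨q, h⟩ else S.dflt

def Aget {s : ℕ} (j : Fin s → Fin S.L) (q : ℕ) : Matrix (Fin S.n) (Fin S.n) ℝ :=
  S.A (S.pget j q)

def Bget {s : ℕ} (j : Fin s → Fin S.L) (q : ℕ) : Matrix (Fin S.n) (Fin S.m) ℝ :=
  S.B (S.pget j q)

/-- The product `A_{j (a+c-1)} * ⋯ * A_{j a}` along a mode path (identity when `c = 0`). -/
def Aprod {s : ℕ} (j : Fin s → Fin S.L) (a c : ℕ) : Matrix (Fin S.n) (Fin S.n) ℝ :=
  ((List.range c).map (fun t => S.Aget j (a + c - 1 - t))).prod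

end MJParams

/-- The coupled difference Riccati equation (CDRE) with zero terminal data, horizon `N`.
The matrix inverse `(W _ _)⁻¹` is Mathlib's matrix inverse (which is the genuine inverse
whenever the matrix is invertible). -/
structure CDRE (S : MJParams) (N : ℤ) where
  P : Fin S.L → ℤ → Matrix (Fin S.n) (Fin S.n) ℝ
  P0 : Fin S.L → ℤ → Matrix (Fin S.n) (Fin S.n) ℝ
  W : Fin S.L → ℤ → Matrix (Fin S.m) (Fin S.m) ℝ
  T0 : Fin S.L → ℤ → Matrix (Fin S.m) (Fin S.n) ℝ
  T : ℕ → Fin S.L → ℤ → Matrix (Fin S.m) (Fin S.m) ℝ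
  hPterm : ∀ i, P i N = 0
  hP0term : ∀ i, ∀ t : ℤ, 0 ≤ t → t ≤ (S.d : ℤ) - 1 → P0 i (N - t) = 0
  hT0term : ∀ i, ∀ t : ℤ, 0 ≤ t → t ≤ (S.d : ℤ) - 1 → T0 i (N - t) = 0
  hTterm : ∀ r : ℕ, 1 ≤ r → r ≤ S.d - 1 → ∀ i, ∀ t : ℤ, 0 ≤ t → t ≤ (S.d : ℤ) - 1 →
    T r i (N - t) = 0
  hP : ∀ i, ∀ k : ℤ, 0 ≤ k → k ≤ N →
    P i (k - 1) = ∑ j, S.Pr i j • (S.Q + (S.A j)ᵀ * (P j k - P0 j k) * S.A j)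
  hP0 : ∀ i, ∀ k : ℤ, 0 ≤ k → k ≤ N →
    P0 i (k - 1) = (T0 i (k - 1))ᵀ * (W i (k - 1))⁻¹ * T0 i (k - 1)
  hW : ∀ i, ∀ k : ℤ, 0 ≤ k → k ≤ N →
    W i (k - S.d) =
      S.expect i S.d (fun j =>
        (S.Bget j (S.d - 1))ᵀ * (P (S.pget j (S.d - 1)) k - P0 (S.pget j (S.d - 1)) k) *
          S.Bget j (S.d - 1) + S.R)
      - ∑ s ∈ Finset.Icc 1 (S.d - 1),
          S.expect i (S.d - s) (fun j =>
            (T s (S.pget j (S.d - s - 1)) (k - s))ᵀ * (W (S.pget j (S.d - s - 1)) (k - s))⁻¹ *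
              T s (S.pget j (S.d - s - 1)) (k - s))
  hT0 : ∀ i, ∀ k : ℤ, 0 ≤ k → k ≤ N →
    T0 i (k - S.d) =
      S.expect i S.d (fun j =>
        (S.Bget j (S.d - 1))ᵀ * (P (S.pget j (S.d - 1)) k - P0 (S.pget j (S.d - 1)) k) *
          S.Aprod j 0 S.d)
      - ∑ s ∈ Finset.Icc 1 (S.d - 1),
          S.expect i (S.d - s) (fun j =>
            (T s (S.pget j (S.d - s - 1)) (k - s))ᵀ * (W (S.pget j (S.d - s - 1)) (k - s))⁻¹ *
              T0 (S.pget j (S.d - s - 1)) (k - s) * S.Aprod j 0 (S.d - s))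
  hT : ∀ r : ℕ, 1 ≤ r → r ≤ S.d - 1 → ∀ i, ∀ k : ℤ, 0 ≤ k → k ≤ N →
    T r i (k - S.d) =
      S.expect i S.d (fun j =>
        (S.Bget j (S.d - 1))ᵀ * (P (S.pget j (S.d - 1)) k - P0 (S.pget j (S.d - 1)) k) *
          (S.Aprod j r (S.d - r) * S.Bget j (r - 1)))
      - ∑ s ∈ Finset.Icc 1 (S.d - r),
          S.expect i (S.d - s) (fun j =>
            (T s (S.pget j (S.d - s - 1)) (k - s))ᵀ * (W (S.pget j (S.d - s - 1)) (k - s))⁻¹ *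
              T0 (S.pget j (S.d - s - 1)) (k - s) * (S.Aprod j r (S.d - s - r) * S.Bget j (r - 1)))
      - ∑ s ∈ Finset.Icc (S.d - r + 1) (S.d - 1),
          S.expect i (S.d - s) (fun j =>
            (T s (S.pget j (S.d - s - 1)) (k - s))ᵀ * (W (S.pget j (S.d - s - 1)) (k - s))⁻¹ *
              T (s - (S.d - r)) (S.pget j (S.d - s - 1)) (k - s))

/-- The CDRE together with the auxiliary quantities `δ` and (path-indexed) `α`. -/
structure CDREX (S : MJParams) (N : ℤ) extends CDRE S N where
  δ : ℕ → Fin S.L → ℤ → Matrix (Fin S.m) (Fin S.n) ℝ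
  α : (s : ℕ) → (Fin s → Fin S.L) → ℤ → Matrix (Fin S.m) (Fin S.n) ℝ
  hδterm : ∀ r i, ∀ t : ℤ, N - 1 ≤ t → δ r i t = 0
  hδ1 : 1 ≤ S.d - 1 → ∀ i, ∀ k : ℤ, 0 ≤ k → k ≤ N →
    (δ 1 i (k - 1))ᵀ = (∑ j, S.Pr i j • ((S.A j)ᵀ * (P j k - P0 j k) * S.B j))
      - (T0 i (k - 1))ᵀ * (W i (k - 1))⁻¹ * T 1 i (k - 1)
  hδr : ∀ r : ℕ, 2 ≤ r → r ≤ S.d - 1 → ∀ i, ∀ k : ℤ, 0 ≤ k → k ≤ N →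
    (δ r i (k - 1))ᵀ = (∑ j, S.Pr i j • ((S.A j)ᵀ * (δ (r - 1) j k)ᵀ))
      - (T0 i (k - 1))ᵀ * (W i (k - 1))⁻¹ * T r i (k - 1)
  hα1 : 1 ≤ S.d - 1 → ∀ (p : Fin 1 → Fin S.L) (t : ℤ), α 1 p t = δ (S.d - 1) (p 0) t
  hαj : ∀ jj : ℕ, 2 ≤ jj → jj ≤ S.d - 1 → ∀ (p : Fin jj → Fin S.L), ∀ k : ℤ, 0 ≤ k → k ≤ N →
    (α jj p (k - 1))ᵀ = (δ (S.d - jj) (S.pget p 0) (k - 1))ᵀ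
      - ∑ s ∈ Finset.Icc 1 (jj - 1),
          (α s (fun t : Fin s => S.pget p (t : ℕ)) (k - 1))ᵀ *
            (W (S.pget p s) (k - 1 - s))⁻¹ * T (S.d - jj + s) (S.pget p s) (k - 1 - s)

/-- The matrix `Ω_{(i₁,…,i_d)}(t, N)` associated with a solution of the CDRE. -/
def CDREX.Omega {S : MJParams} {N : ℤ} (c : CDREX S N) (p : Fin S.d → Fin S.L) (t : ℤ) :
    Matrix (Fin S.n) (Fin S.n) ℝ :=
  (c.P (S.pget p 0) t - c.P0 (S.pget p 0) t)
    - ∑ s ∈ Finset.Icc 1 (S.d - 1),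
        (c.α s (fun r : Fin s => S.pget p (r : ℕ)) t)ᵀ * (c.W (S.pget p s) (t - s))⁻¹ *
          c.α s (fun r : Fin s => S.pget p (r : ℕ)) t

/-- The coupled algebraic Riccati equation (CARE): the stationary version of the CDRE,
with every `W i` invertible. -/
structure CARE (S : MJParams) where
  P : Fin S.L → Matrix (Fin S.n) (Fin S.n) ℝ
  P0 : Fin S.L → Matrix (Fin S.n) (Fin S.n) ℝ
  W : Fin S.L → Matrix (Fin S.m) (Fin S.m) ℝ
  T0 : Fin S.L → Matrix (Fin S.m) (Fin S.n) ℝ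
  T : ℕ → Fin S.L → Matrix (Fin S.m) (Fin S.m) ℝ
  δ : ℕ → Fin S.L → Matrix (Fin S.m) (Fin S.n) ℝ
  α : (s : ℕ) → (Fin s → Fin S.L) → Matrix (Fin S.m) (Fin S.n) ℝ
  hWunit : ∀ i, IsUnit (W i)
  hP : ∀ i, P i = ∑ j, S.Pr i j • (S.Q + (S.A j)ᵀ * (P j - P0 j) * S.A j)
  hP0 : ∀ i, P0 i = (T0 i)ᵀ * (W i)⁻¹ * T0 i
  hW : ∀ i, W i =
      S.expect i S.d (fun j =>
        (S.Bget j (S.d - 1))ᵀ * (P (S.pget j (S.d - 1)) - P0 (S.pget j (S.d - 1))) *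
          S.Bget j (S.d - 1) + S.R)
      - ∑ s ∈ Finset.Icc 1 (S.d - 1),
          S.expect i (S.d - s) (fun j =>
            (T s (S.pget j (S.d - s - 1)))ᵀ * (W (S.pget j (S.d - s - 1)))⁻¹ *
              T s (S.pget j (S.d - s - 1)))
  hT0 : ∀ i, T0 i =
      S.expect i S.d (fun j =>
        (S.Bget j (S.d - 1))ᵀ * (P (S.pget j (S.d - 1)) - P0 (S.pget j (S.d - 1))) *
          S.Aprod j 0 S.d)
      - ∑ s ∈ Finset.Icc 1 (S.d - 1),
          S.expect i (S.d - s) (fun j =>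
            (T s (S.pget j (S.d - s - 1)))ᵀ * (W (S.pget j (S.d - s - 1)))⁻¹ *
              T0 (S.pget j (S.d - s - 1)) * S.Aprod j 0 (S.d - s))
  hT : ∀ r : ℕ, 1 ≤ r → r ≤ S.d - 1 → ∀ i, T r i =
      S.expect i S.d (fun j =>
        (S.Bget j (S.d - 1))ᵀ * (P (S.pget j (S.d - 1)) - P0 (S.pget j (S.d - 1))) *
          (S.Aprod j r (S.d - r) * S.Bget j (r - 1)))
      - ∑ s ∈ Finset.Icc 1 (S.d - r),
          S.expect i (S.d - s) (fun j =>
            (T s (S.pget j (S.d - s - 1)))ᵀ * (W (S.pget j (S.d - s - 1)))⁻¹ *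
              T0 (S.pget j (S.d - s - 1)) * (S.Aprod j r (S.d - s - r) * S.Bget j (r - 1)))
      - ∑ s ∈ Finset.Icc (S.d - r + 1) (S.d - 1),
          S.expect i (S.d - s) (fun j =>
            (T s (S.pget j (S.d - s - 1)))ᵀ * (W (S.pget j (S.d - s - 1)))⁻¹ *
              T (s - (S.d - r)) (S.pget j (S.d - s - 1)))
  hδ1 : 1 ≤ S.d - 1 → ∀ i,
    (δ 1 i)ᵀ = (∑ j, S.Pr i j • ((S.A j)ᵀ * (P j - P0 j) * S.B j))
      - (T0 i)ᵀ * (W i)⁻¹ * T 1 i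
  hδr : ∀ r : ℕ, 2 ≤ r → r ≤ S.d - 1 → ∀ i,
    (δ r i)ᵀ = (∑ j, S.Pr i j • ((S.A j)ᵀ * (δ (r - 1) j)ᵀ))
      - (T0 i)ᵀ * (W i)⁻¹ * T r i
  hα1 : 1 ≤ S.d - 1 → ∀ (p : Fin 1 → Fin S.L), α 1 p = δ (S.d - 1) (p 0)
  hαj : ∀ jj : ℕ, 2 ≤ jj → jj ≤ S.d - 1 → ∀ (p : Fin jj → Fin S.L),
    (α jj p)ᵀ = (δ (S.d - jj) (S.pget p 0))ᵀ
      - ∑ s ∈ Finset.Icc 1 (jj - 1),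
          (α s (fun t : Fin s => S.pget p (t : ℕ)))ᵀ * (W (S.pget p s))⁻¹ *
            T (S.d - jj + s) (S.pget p s)

/-- The matrix `Ω_{(i₁,…,i_d)}` associated with a solution of the CARE. -/
def CARE.Omega {S : MJParams} (c : CARE S) (p : Fin S.d → Fin S.L) :
    Matrix (Fin S.n) (Fin S.n) ℝ :=
  (c.P (S.pget p 0) - c.P0 (S.pget p 0))
    - ∑ s ∈ Finset.Icc 1 (S.d - 1),
        (c.α s (fun r : Fin s => S.pget p (r : ℕ)))ᵀ * (c.W (S.pget p s))⁻¹ *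
          c.α s (fun r : Fin s => S.pget p (r : ℕ))

/-- A probability space carrying a time-homogeneous Markov chain with values in
`{1,…,L}` and transition matrix `Pr`. -/
structure MarkovChain (S : MJParams) (Ω : Type) [MeasurableSpace Ω] where
  μ : Measure Ω
  hμ : IsProbabilityMeasure μ
  θ : ℕ → Ω → Fin S.L
  hθ : ∀ k, Measurable (θ k)
  hmarkov : ∀ (k : ℕ) (i : ℕ → Fin S.L) (j : Fin S.L),
    0 < μ (⋂ t ∈ Finset.range (k + 1), {ω | θ t ω = i t}) →
    μ ({ω | θ (k + 1) ω = j} ∩ ⋂ t ∈ Finset.range (k + 1), {ω | θ t ω = i t})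
      = ENNReal.ofReal (S.Pr (i k) j) * μ (⋂ t ∈ Finset.range (k + 1), {ω | θ t ω = i t})

/-- The σ-algebra `G_k` generated by `θ(0), …, θ(k)`. -/
def MarkovChain.G {S : MJParams} {Ω : Type} [MeasurableSpace Ω] (M : MarkovChain S Ω) (k : ℕ) : MeasurableSpace Ω :=
  ⨆ t ∈ Finset.range (k + 1), MeasurableSpace.comap (M.θ t) ⊤

/-- The state trajectory of the MJLS with input delay, given initial state `x0` and
input process `u` (defined for all integer times; negative times carry the initial inputs). -/
def traj (S : MJParams) {Ω : Type} [MeasurableSpace Ω] (M : MarkovChain S Ω) (x0 : Fin S.n → ℝ)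
    (u : ℤ → Ω → Fin S.m → ℝ) : ℕ → Ω → Fin S.n → ℝ
  | 0 => fun _ => x0
  | k + 1 => fun ω =>
      (S.A (M.θ k ω)).mulVec (traj S M x0 u k ω)
        + (S.B (M.θ k ω)).mulVec (u ((k : ℤ) - S.d) ω)

/-- The input process `u` carries the prescribed initial data on `[-d, -1]`. -/
def HasInit (S : MJParams) {Ω : Type} [MeasurableSpace Ω] (M : MarkovChain S Ω) (uinit : ℤ → Fin S.m → ℝ)
    (u : ℤ → Ω → Fin S.m → ℝ) : Prop :=
  ∀ t : ℤ, -(S.d : ℤ) ≤ t → t < 0 → u t = fun _ => uinit t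

/-- `u` is the closed loop input under the delayed feedback
`u(k) = -K⁰_{θ(k)} x(k) - ∑_{r=1}^{d-1} K^r_{θ(k)} u(k+r-d)`. -/
def IsFeedback (S : MJParams) {Ω : Type} [MeasurableSpace Ω] (M : MarkovChain S Ω)
    (K0 : Fin S.L → Matrix (Fin S.m) (Fin S.n) ℝ)
    (K : ℕ → Fin S.L → Matrix (Fin S.m) (Fin S.m) ℝ)
    (x0 : Fin S.n → ℝ) (uinit : ℤ → Fin S.m → ℝ)
    (u : ℤ → Ω → Fin S.m → ℝ) : Prop :=
  HasInit S M uinit u ∧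
  ∀ k : ℕ, u (k : ℤ) = fun ω =>
    -((K0 (M.θ k ω)).mulVec (traj S M x0 u k ω))
      - ∑ r ∈ Finset.Icc 1 (S.d - 1), (K r (M.θ k ω)).mulVec (u ((k : ℤ) + r - S.d) ω)

/-- Mean square stabilizability of the MJLS with input delay. -/
def MJParams.MSStabilizable (S : MJParams) : Prop :=
  ∃ (K0 : Fin S.L → Matrix (Fin S.m) (Fin S.n) ℝ)
    (K : ℕ → Fin S.L → Matrix (Fin S.m) (Fin S.m) ℝ),
    ∀ {Ω : Type} [MeasurableSpace Ω] (M : MarkovChain S Ω) (x0 : Fin S.n → ℝ) (uinit : ℤ → Fin S.m → ℝ)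
      (u : ℤ → Ω → Fin S.m → ℝ), IsFeedback S M K0 K x0 uinit u →
      Tendsto (fun k : ℕ => ∫ ω, (∑ i, (traj S M x0 u k ω i) ^ 2) ∂M.μ) atTop (𝓝 0)

/-- The uncontrolled trajectory `x(k+1) = A_{θ(k)} x(k)`. -/
def trajU (S : MJParams) {Ω : Type} [MeasurableSpace Ω] (M : MarkovChain S Ω) (x0 : Fin S.n → ℝ) :
    ℕ → Ω → Fin S.n → ℝ
  | 0 => fun _ => x0
  | k + 1 => fun ω => (S.A (M.θ k ω)).mulVec (trajU S M x0 k ω)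

/-- Exact observability of `(A, C)`. -/
def MJParams.ExactlyObservable (S : MJParams) {p : ℕ}
    (C : Matrix (Fin p) (Fin S.n) ℝ) : Prop :=
  ∀ N : ℕ, S.n ≤ N → ∀ {Ω : Type} [MeasurableSpace Ω] (M : MarkovChain S Ω) (i0 : Fin S.L),
    M.μ {ω | M.θ 0 ω = i0} = 1 →
    ∀ x0 : Fin S.n → ℝ,
      (∀ k ≤ N, ∀ᵐ ω ∂M.μ, C.mulVec (trajU S M x0 k ω) = 0) → x0 = 0

/-- `u` is the closed-loop input under the stationary feedback controller `u*` built from a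
CARE solution. -/
def IsCareFeedback (S : MJParams) {Ω : Type} [MeasurableSpace Ω] (M : MarkovChain S Ω) (c : CARE S)
    (x0 : Fin S.n → ℝ) (uinit : ℤ → Fin S.m → ℝ)
    (u : ℤ → Ω → Fin S.m → ℝ) : Prop :=
  HasInit S M uinit u ∧
  ∀ k : ℕ, u (k : ℤ) = fun ω =>
    -(((c.W (M.θ k ω))⁻¹ * c.T0 (M.θ k ω) * S.A (M.θ k ω)).mulVec (traj S M x0 u k ω))
      - ((c.W (M.θ k ω))⁻¹ * c.T0 (M.θ k ω) * S.B (M.θ k ω)).mulVec (u ((k : ℤ) - S.d) ω)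
      - ∑ j ∈ Finset.Icc 1 (S.d - 1),
          ((c.W (M.θ k ω))⁻¹ * c.T j (M.θ k ω)).mulVec (u ((k : ℤ) - S.d + j) ω)

/-- The infinite-horizon cost `J(u)` (valued in `ℝ≥0∞`). -/
def Jinf (S : MJParams) {Ω : Type} [MeasurableSpace Ω] (M : MarkovChain S Ω) (x0 : Fin S.n → ℝ)
    (u : ℤ → Ω → Fin S.m → ℝ) : ℝ≥0∞ :=
  (∑' k : ℕ, ENNReal.ofReal
      (∫ ω, (traj S M x0 u k ω) ⬝ᵥ (S.Q.mulVec (traj S M x0 u k ω)) ∂M.μ))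
  + ∑' k : ℕ, ENNReal.ofReal
      (∫ ω, (u (k : ℤ) ω) ⬝ᵥ (S.R.mulVec (u (k : ℤ) ω)) ∂M.μ)

/-- The finite-horizon cost `J_N(u)`. -/
def Jfin (S : MJParams) {Ω : Type} [MeasurableSpace Ω] (M : MarkovChain S Ω) (N : ℕ) (x0 : Fin S.n → ℝ)
    (u : ℤ → Ω → Fin S.m → ℝ) : ℝ :=
  ∫ ω, ((∑ k ∈ Finset.range (N + 1),
        (traj S M x0 u k ω) ⬝ᵥ (S.Q.mulVec (traj S M x0 u k ω)))
      + ∑ k ∈ Finset.Icc S.d N,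
        (u ((k : ℤ) - S.d) ω) ⬝ᵥ (S.R.mulVec (u ((k : ℤ) - S.d) ω))) ∂M.μ

/-- The Lyapunov functional `V(k)` associated with a CARE solution and an input process. -/
def Vfun (S : MJParams) {Ω : Type} [MeasurableSpace Ω] (M : MarkovChain S Ω) (c : CARE S) (x0 : Fin S.n → ℝ)
    (u : ℤ → Ω → Fin S.m → ℝ) (k : ℕ) : ℝ :=
  (∫ ω, (traj S M x0 u k ω) ⬝ᵥ
      ((c.P (M.θ (k - 1) ω) - c.P0 (M.θ (k - 1) ω)).mulVec (traj S M x0 u k ω)) ∂M.μ)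
  - ∑ s ∈ Finset.Icc 1 (S.d - 1),
      ∫ ω,
        (condExp (M.G (k - s - 1)) M.μ
            (fun ω' => (c.α s (fun t : Fin s => M.θ (k - 1 - (t : ℕ)) ω')).mulVec
              (traj S M x0 u k ω')) ω)
          ⬝ᵥ ((c.W (M.θ (k - s - 1) ω))⁻¹.mulVec
            (condExp (M.G (k - s - 1)) M.μ
              (fun ω' => (c.α s (fun t : Fin s => M.θ (k - 1 - (t : ℕ)) ω')).mulVec
                (traj S M x0 u k ω')) ω)) ∂M.μ

/-- Index type for the augmented state `col(x(k), u(k-1), …, u(k-d))`: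
`inl` is the state block (block `0`), `inr (t, ·)` is block `t+1` (holding `u(k-t-1)`). -/
abbrev AugIx (S : MJParams) : Type := Fin S.n ⊕ (Fin S.d × Fin S.m)

/-- The augmented system matrix `Ā_i`. -/
def Abar (S : MJParams) (i : Fin S.L) : Matrix (AugIx S) (AugIx S) ℝ :=
  Matrix.of fun a b =>
    match a, b with
    | Sum.inl a, Sum.inl b => S.A i a b
    | Sum.inl a, Sum.inr (t, b) => if (t : ℕ) = S.d - 1 then S.B i a b else 0
    | Sum.inr _, Sum.inl _ => 0
    | Sum.inr (t, a), Sum.inr (s, b) => if (t : ℕ) = (s : ℕ) + 1 ∧ a = b then 1 else 0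

/-- The augmented input matrix `B̄`. -/
def Bbar (S : MJParams) : Matrix (AugIx S) (Fin S.m) ℝ :=
  Matrix.of fun a b =>
    match a with
    | Sum.inl _ => 0
    | Sum.inr (t, a) => if (t : ℕ) = 0 ∧ a = b then 1 else 0

/-- The augmented weight matrix `Q̄ = diag(Q, 0, …, 0)`. -/
def Qbar (S : MJParams) : Matrix (AugIx S) (AugIx S) ℝ :=
  Matrix.of fun a b =>
    match a, b with
    | Sum.inl a, Sum.inl b => S.Q a b
    | _, _ => 0

/-- The augmented coupled Riccati recursion with horizon `N`. -/
structure AugRic (S : MJParams) (N : ℕ) where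
  Pb : Fin S.L → ℕ → Matrix (AugIx S) (AugIx S) ℝ
  hterm : ∀ i, Pb i (N + 1) = 0
  hrec : ∀ i, ∀ k ≤ N, Pb i k =
    Qbar S + (Abar S i)ᵀ * (∑ j, S.Pr i j • Pb j (k + 1)) * Abar S i
      - ((Bbar S)ᵀ * (∑ j, S.Pr i j • Pb j (k + 1)) * Abar S i)ᵀ *
          (S.R + (Bbar S)ᵀ * (∑ j, S.Pr i j • Pb j (k + 1)) * Bbar S)⁻¹ *
          ((Bbar S)ᵀ * (∑ j, S.Pr i j • Pb j (k + 1)) * Abar S i)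

/-- `Ῡ_i(k)` of the augmented recursion. -/
def AugRic.Ups {S : MJParams} {N : ℕ} (a : AugRic S N) (i : Fin S.L) (k : ℕ) :
    Matrix (Fin S.m) (Fin S.m) ℝ :=
  S.R + (Bbar S)ᵀ * (∑ j, S.Pr i j • a.Pb j (k + 1)) * Bbar S

/-- Block `(1,0)` of an augmented matrix. -/
def blk10 (S : MJParams) (Pm : Matrix (AugIx S) (AugIx S) ℝ) :
    Matrix (Fin S.m) (Fin S.n) ℝ :=
  Matrix.of fun a b => Pm (Sum.inr (⟨0, S.hd⟩, a)) (Sum.inl b)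

/-- Block `(1,1)` of an augmented matrix. -/
def blk11 (S : MJParams) (Pm : Matrix (AugIx S) (AugIx S) ℝ) :
    Matrix (Fin S.m) (Fin S.m) ℝ :=
  Matrix.of fun a b => Pm (Sum.inr (⟨0, S.hd⟩, a)) (Sum.inr (⟨0, S.hd⟩, b))

/-- Block `(1, r+1)` of an augmented matrix (for `r < d`). -/
def blk1c (S : MJParams) (Pm : Matrix (AugIx S) (AugIx S) ℝ) (r : ℕ) :
    Matrix (Fin S.m) (Fin S.m) ℝ :=
  Matrix.of fun a b =>
    Pm (Sum.inr (⟨0, S.hd⟩, a)) (Sum.inr (if h : r < S.d then ⟨r, h⟩ else ⟨0, S.hd⟩, b))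

/-- The initial augmented state `col(x₀, u(-1), …, u(-d))`. -/
def augInit (S : MJParams) (x0 : Fin S.n → ℝ) (uinit : ℤ → Fin S.m → ℝ) :
    AugIx S → ℝ :=
  fun a =>
    match a with
    | Sum.inl a => x0 a
    | Sum.inr (t, b) => uinit (-(t : ℤ) - 1) b

end

/-! Read in the time to go `ν = N - t`, the CDRE is the same backward recursion for every
horizon, with the same terminal data: `P, P⁰` at `ν` are determined by `P, P⁰` at `ν - 1` and by
`W, T⁰` at `ν`, while `W, T⁰, T^r` at `ν ≥ d` are determined by `P, P⁰` at `ν - d` and by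
`W, T^s` at `ν - s` (`1 ≤ s ≤ d - 1`). Strong induction on `ν` therefore makes two solutions
agree. -/

namespace CDRE

variable {S : MJParams} {N N' : ℤ} (c : CDRE S N) (c' : CDRE S N')

def StateAgree (t t' : ℤ) : Prop :=
  ∀ l, c.P l t = c'.P l t' ∧ c.P0 l t = c'.P0 l t'

def FeedbackAgree (t t' : ℤ) : Prop :=
  ∀ l, c.W l t = c'.W l t' ∧ c.T0 l t = c'.T0 l t' ∧
    ∀ r : ℕ, 1 ≤ r → r ≤ S.d - 1 → c.T r l t = c'.T r l t'

def TVanish (t : ℤ) : Prop :=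
  ∀ (r : ℕ) l, 1 ≤ r → r ≤ S.d - 1 → c.T r l t = 0

/-- What the correction terms `T^sᵀ W⁻¹ (⋯)` of the `W`, `T⁰`, `T^r` recursions at time `k`
need from the times `k - s`: near the horizon `W` is unconstrained, but there `T^s = 0`. -/
def CorrectionsAgree (k k' : ℤ) : Prop :=
  ∀ s : ℕ, 1 ≤ s → s ≤ S.d - 1 →
    FeedbackAgree c c' (k - s) (k' - s) ∨ c.TVanish (k - s) ∧ c'.TVanish (k' - s)

variable {c c'}

theorem P0_eq_zero_of_lt {t : ℤ} (h₁ : N - S.d < t) (h₂ : t ≤ N) (l : Fin S.L) :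
    c.P0 l t = 0 := by
  simpa using c.hP0term l (N - t) (by omega) (by omega)

theorem tVanish_of_lt {t : ℤ} (h₁ : N - S.d < t) (h₂ : t ≤ N) : c.TVanish t :=
  fun r l hr₁ hr₂ => by
  simpa using c.hTterm r hr₁ hr₂ l (N - t) (by omega) (by omega)

theorem stateAgree_horizon : StateAgree c c' N N' := fun l => by
  have hd := S.hd
  refine ⟨by rw [c.hPterm, c'.hPterm], ?_⟩
  rw [P0_eq_zero_of_lt (by omega) le_rfl, P0_eq_zero_of_lt (by omega) le_rfl]

theorem correction_eq {u u' : ℤ}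
    (h : FeedbackAgree c c' u u' ∨ c.TVanish u ∧ c'.TVanish u')
    {s : ℕ} (hs₁ : 1 ≤ s) (hs₂ : s ≤ S.d - 1) (l : Fin S.L) {ι : Type*}
    {Y Y' : Matrix (Fin S.m) ι ℝ} (hY : FeedbackAgree c c' u u' → Y = Y') :
    (c.T s l u)ᵀ * (c.W l u)⁻¹ * Y = (c'.T s l u')ᵀ * (c'.W l u')⁻¹ * Y' := by
  rcases h with h | ⟨hv, hv'⟩
  · obtain ⟨hW, -, hT⟩ := h l
    rw [hW, hT s hs₁ hs₂, hY h]
  · simp [hv s l hs₁ hs₂, hv' s l hs₁ hs₂]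

theorem W_sub_delay_eq {k k' : ℤ} (hk : 0 ≤ k) (hkN : k ≤ N) (hk' : 0 ≤ k') (hkN' : k' ≤ N')
    (hstate : StateAgree c c' k k') (hcorr : CorrectionsAgree c c' k k') (l : Fin S.L) :
    c.W l (k - S.d) = c'.W l (k' - S.d) := by
  rw [c.hW l k hk hkN, c'.hW l k' hk' hkN']
  obtain ⟨hP, hP0⟩ := forall_and.mp hstate
  congr 1
  · simp only [hP, hP0]
  · refine Finset.sum_congr rfl fun s hs => ?_
    rw [Finset.mem_Icc] at hs
    congr 1
    funext j
    exact correction_eq (hcorr s hs.1 hs.2) hs.1 hs.2 _ fun h => (h _).2.2 s hs.1 hs.2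

theorem T0_sub_delay_eq {k k' : ℤ} (hk : 0 ≤ k) (hkN : k ≤ N) (hk' : 0 ≤ k') (hkN' : k' ≤ N')
    (hstate : StateAgree c c' k k') (hcorr : CorrectionsAgree c c' k k') (l : Fin S.L) :
    c.T0 l (k - S.d) = c'.T0 l (k' - S.d) := by
  rw [c.hT0 l k hk hkN, c'.hT0 l k' hk' hkN']
  obtain ⟨hP, hP0⟩ := forall_and.mp hstate
  congr 1
  · simp only [hP, hP0]
  · refine Finset.sum_congr rfl fun s hs => ?_
    rw [Finset.mem_Icc] at hs
    congr 1
    funext j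
    congr 1
    exact correction_eq (hcorr s hs.1 hs.2) hs.1 hs.2 _ fun h => (h _).2.1

theorem T_sub_delay_eq {k k' : ℤ} (hk : 0 ≤ k) (hkN : k ≤ N) (hk' : 0 ≤ k') (hkN' : k' ≤ N')
    (hstate : StateAgree c c' k k') (hcorr : CorrectionsAgree c c' k k') {r : ℕ} (hr₁ : 1 ≤ r)
    (hr₂ : r ≤ S.d - 1) (l : Fin S.L) : c.T r l (k - S.d) = c'.T r l (k' - S.d) := by
  rw [c.hT r hr₁ hr₂ l k hk hkN, c'.hT r hr₁ hr₂ l k' hk' hkN']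
  obtain ⟨hP, hP0⟩ := forall_and.mp hstate
  congr 1
  congr 1
  · simp only [hP, hP0]
  · refine Finset.sum_congr rfl fun s hs => ?_
    rw [Finset.mem_Icc] at hs
    have hs₂ : s ≤ S.d - 1 := by omega
    congr 1
    funext j
    congr 1
    exact correction_eq (hcorr s hs.1 hs₂) hs.1 hs₂ _ fun h => (h _).2.1
  · refine Finset.sum_congr rfl fun s hs => ?_
    rw [Finset.mem_Icc] at hs
    have hs₁ : 1 ≤ s := by omega
    congr 1
    funext j
    exact correction_eq (hcorr s hs₁ hs.2) hs₁ hs.2 _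
      fun h => (h _).2.2 _ (by omega) (by omega)

theorem feedbackAgree_sub_delay {k k' : ℤ} (hk : 0 ≤ k) (hkN : k ≤ N) (hk' : 0 ≤ k')
    (hkN' : k' ≤ N') (hstate : StateAgree c c' k k') (hcorr : CorrectionsAgree c c' k k') :
    FeedbackAgree c c' (k - S.d) (k' - S.d) := fun l =>
  ⟨W_sub_delay_eq hk hkN hk' hkN' hstate hcorr l, T0_sub_delay_eq hk hkN hk' hkN' hstate hcorr l,
    fun _ hr₁ hr₂ => T_sub_delay_eq hk hkN hk' hkN' hstate hcorr hr₁ hr₂ l⟩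

theorem P_sub_one_eq {k k' : ℤ} (hk : 0 ≤ k) (hkN : k ≤ N) (hk' : 0 ≤ k') (hkN' : k' ≤ N')
    (hstate : StateAgree c c' k k') (l : Fin S.L) : c.P l (k - 1) = c'.P l (k' - 1) := by
  rw [c.hP l k hk hkN, c'.hP l k' hk' hkN']
  obtain ⟨hP, hP0⟩ := forall_and.mp hstate
  simp only [hP, hP0]

theorem P0_sub_one_eq {k k' : ℤ} (hk : 0 ≤ k) (hkN : k ≤ N) (hk' : 0 ≤ k') (hkN' : k' ≤ N')
    (hfb : FeedbackAgree c c' (k - 1) (k' - 1)) (l : Fin S.L) :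
    c.P0 l (k - 1) = c'.P0 l (k' - 1) := by
  obtain ⟨hW, hT0, -⟩ := hfb l
  rw [c.hP0 l k hk hkN, c'.hP0 l k' hk' hkN', hW, hT0]

theorem agree_of_sub_eq {t t' : ℤ} (hshift : N - t = N' - t') (ht : t ≤ N) :
    (-1 ≤ t → -1 ≤ t' → StateAgree c c' t t') ∧
    (-(S.d : ℤ) ≤ t → -(S.d : ℤ) ≤ t' → t ≤ N - S.d → FeedbackAgree c c' t t') := by
  have hd := S.hd
  obtain ⟨ν, hν⟩ : ∃ ν : ℕ, N - t = ν := ⟨(N - t).toNat, by omega⟩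
  induction ν using Nat.strong_induction_on generalizing t t' with
  | _ ν ih =>
    have hfb : -(S.d : ℤ) ≤ t → -(S.d : ℤ) ≤ t' → t ≤ N - S.d → FeedbackAgree c c' t t' := by
      intro h₁ h₁' h₂
      obtain ⟨k, rfl⟩ : ∃ k, t = k - S.d := ⟨t + S.d, by ring⟩
      obtain ⟨k', rfl⟩ : ∃ k', t' = k' - S.d := ⟨t' + S.d, by ring⟩
      have hstate := (ih (ν - S.d) (by omega) (t := k) (t' := k') (by omega) (by omega)
        (by omega)).1 (by omega) (by omega)
      refine feedbackAgree_sub_delay (by omega) (by omega) (by omega) (by omega) hstate ?_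
      intro s hs₁ hs₂
      by_cases hnear : N - S.d < k - s
      · exact Or.inr ⟨tVanish_of_lt hnear (by omega), tVanish_of_lt (by omega) (by omega)⟩
      · exact Or.inl ((ih (ν - S.d + s) (by omega) (by omega) (by omega) (by omega)).2
          (by omega) (by omega) (by omega))
    refine ⟨fun h₁ h₁' => ?_, hfb⟩
    rcases Nat.eq_zero_or_pos ν with rfl | hν₀
    · obtain rfl : t = N := by omega
      obtain rfl : t' = N' := by omega
      exact stateAgree_horizon
    obtain ⟨k, rfl⟩ : ∃ k, t = k - 1 := ⟨t + 1, by ring⟩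
    obtain ⟨k', rfl⟩ : ∃ k', t' = k' - 1 := ⟨t' + 1, by ring⟩
    have hstate := (ih (ν - 1) (by omega) (t := k) (t' := k') (by omega) (by omega)
      (by omega)).1 (by omega) (by omega)
    refine fun l => ⟨P_sub_one_eq (by omega) (by omega) (by omega) (by omega) hstate l, ?_⟩
    by_cases hnear : N - S.d < k - 1
    · rw [P0_eq_zero_of_lt hnear (by omega), P0_eq_zero_of_lt (by omega) (by omega)]
    · exact P0_sub_one_eq (by omega) (by omega) (by omega) (by omega)
        (hfb (by omega) (by omega) (by omega)) l

end CDRE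

theorem stmt1_general (S : MJParams) (N N' : ℤ) (c : CDRE S N) (c' : CDRE S N') (i : Fin S.L) (t t' : ℤ)
    (hshift : N - t = N' - t') :
    (-1 ≤ t → t ≤ N → -1 ≤ t' → t' ≤ N' →
      c.P i t = c'.P i t' ∧ c.P0 i t = c'.P0 i t') ∧
    (-(S.d : ℤ) ≤ t → t ≤ N - S.d → -(S.d : ℤ) ≤ t' → t' ≤ N' - S.d →
      c.W i t = c'.W i t' ∧ c.T0 i t = c'.T0 i t' ∧
      ∀ r : ℕ, 1 ≤ r → r ≤ S.d - 1 → c.T r i t = c'.T r i t') := by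
  constructor
  · intro h₁ h₂ h₁' _
    exact (CDRE.agree_of_sub_eq (c := c) (c' := c') hshift h₂).1 h₁ h₁' i
  · intro h₁ h₂ h₁' _
    exact (CDRE.agree_of_sub_eq (c := c) (c' := c') hshift (by omega)).2 h₁ h₁' h₂ i

theorem stmt1 (S : MJParams) (hR : S.R.PosDef) (hQ : S.Q.PosSemidef)
    (N N' : ℤ) (hN : (S.d : ℤ) ≤ N) (hN' : (S.d : ℤ) ≤ N')
    (c : CDRE S N) (c' : CDRE S N') (i : Fin S.L) (t t' : ℤ)
    (hshift : N - t = N' - t') :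
    (-1 ≤ t → t ≤ N → -1 ≤ t' → t' ≤ N' →
      c.P i t = c'.P i t' ∧ c.P0 i t = c'.P0 i t') ∧
    (-(S.d : ℤ) ≤ t → t ≤ N - S.d → -(S.d : ℤ) ≤ t' → t' ≤ N' - S.d →
      c.W i t = c'.W i t' ∧ c.T0 i t = c'.T0 i t' ∧
      ∀ r : ℕ, 1 ≤ r → r ≤ S.d - 1 → c.T r i t = c'.T r i t') :=
  stmt1_general S N N' c c' i t t' hshift
end

section
/- Assume d ≥ 2, R is positive definite and Q is positive semidefinite, and let N ≥ d. Then the CDRE and α quantities satisfy, for every mode i ∈ {1,…,L} and every integer k with 0 ≤ k ≤ N−d+1: Σ_{j=1}^{L} λ_{ij} A_j′ α^{d−1}_{(j)}(k, N)′ = T_i^0(k−1, N)′ and Σ_{j=1}^{L} λ_{ij} B_j′ α^{d−1}_{(j)}(k, N)′ = T_i^1(k−1, N)′. -/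
open MeasureTheory Filter Matrix Topology
open scoped ENNReal

/-! Unrolling the recursion of `δʳ` along mode paths writes `δ_i^r(t)ᵀ` as an expectation, over
paths of length `r` started at `i`, of `(A ⋯ A)ᵀ (P - P⁰) B` at the end of the path, minus one gain
term `T⁰ᵀ W⁻¹ T^{r-s}` for each intermediate step `s`. Averaging `A_jᵀ δ_j^{d-1}` (resp.
`B_jᵀ δ_j^{d-1}`) over the next mode `j` extends these paths by one step, and the result is exactly
the transpose of the right-hand side of the recursion for `T⁰` (resp. `T¹`), reindexed by
`s ↦ d - 1 - s`. Transposing that recursion needs `P - P⁰` and `W` to be symmetric, which follows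
by backward induction from the symmetry of `Q` and `R`. -/

lemma Finset.sum_Icc_one_eq_sum_range_sub {β : Type*} [AddCommMonoid β] (r : ℕ) (f : ℕ → β) :
    ∑ s ∈ Finset.Icc 1 r, f s = ∑ s ∈ Finset.range r, f (r - s) := by
  refine Finset.sum_nbij' (r - ·) (r - ·) ?_ ?_ ?_ ?_ ?_ <;> intro s hs <;>
    simp only [Finset.mem_Icc, Finset.mem_range] at hs ⊢ <;>
    first | omega | exact congrArg f (by omega)

namespace Matrix

variable {ι α : Type*}

lemma isSymm_sum [AddCommMonoid α] {κ : Type*} (s : Finset κ) {f : κ → Matrix ι ι α}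
    (h : ∀ x ∈ s, (f x).IsSymm) : (∑ x ∈ s, f x).IsSymm :=
  Finset.sum_induction f IsSymm (fun _ _ => IsSymm.add) isSymm_zero h

lemma isSymm_transpose_mul_mul [Fintype ι] [CommSemiring α] {κ : Type*} [Fintype κ]
    {A : Matrix κ κ α} (hA : A.IsSymm) (B : Matrix κ ι α) : (Bᵀ * A * B).IsSymm := by
  rw [IsSymm, transpose_mul, transpose_mul, transpose_transpose, hA.eq, Matrix.mul_assoc]

end Matrix

namespace MJParams

variable (S : MJParams)

lemma pget_vecCons_zero (i : Fin S.L) {s : ℕ} (p : Fin s → Fin S.L) :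
    S.pget (vecCons i p) 0 = i := by
  simp [pget]

lemma pget_vecCons_succ (i : Fin S.L) {s : ℕ} (p : Fin s → Fin S.L) (q : ℕ) :
    S.pget (vecCons i p) (q + 1) = S.pget p q := by
  unfold pget
  by_cases h : q < s
  · rw [dif_pos h, dif_pos (by omega)]
    exact cons_val_succ i p ⟨q, h⟩
  · rw [dif_neg h, dif_neg (by omega)]

lemma pw_vecCons (i j : Fin S.L) {s : ℕ} (p : Fin s → Fin S.L) :
    S.pw i (vecCons j p) = S.Pr i j * S.pw j p := by
  rw [pw, pw, Fin.prod_univ_succ]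
  congr 1
  refine Finset.prod_congr rfl fun t _ => ?_
  obtain ⟨_ | t, ht⟩ := t
  · rfl
  · exact congrArg (S.Pr · _) (cons_val_succ' _ _ _)

section Expect

variable (i : Fin S.L) {s : ℕ}

lemma expect_zero {β : Type*} [AddCommMonoid β] [Module ℝ β] (f : (Fin 0 → Fin S.L) → β) :
    S.expect i 0 f = f ![] := by
  simp [expect, pw, Subsingleton.elim _ (![] : Fin 0 → Fin S.L)]

lemma expect_succ {β : Type*} [AddCommMonoid β] [Module ℝ β]
    (f : (Fin (s + 1) → Fin S.L) → β) :
    S.expect i (s + 1) f = ∑ j, S.Pr i j • S.expect j s (fun p => f (vecCons j p)) := by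
  simp only [expect, Finset.smul_sum, smul_smul, ← pw_vecCons]
  rw [← (Fin.consEquiv fun _ => Fin S.L).sum_comp, Fintype.sum_prod_type]
  rfl

variable {κ μ ν : Type*}

lemma transpose_expect (f : (Fin s → Fin S.L) → Matrix μ ν ℝ) :
    (S.expect i s f)ᵀ = S.expect i s (fun j => (f j)ᵀ) := by
  simp only [expect, transpose_sum, transpose_smul]

lemma mul_expect [Fintype μ] (M : Matrix κ μ ℝ) (f : (Fin s → Fin S.L) → Matrix μ ν ℝ) :
    M * S.expect i s f = S.expect i s (fun j => M * f j) := by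
  simp only [expect, Matrix.mul_sum, Matrix.mul_smul]

lemma isSymm_expect {f : (Fin s → Fin S.L) → Matrix μ μ ℝ} (hf : ∀ j, (f j).IsSymm) :
    (S.expect i s f).IsSymm := by
  rw [IsSymm, transpose_expect]
  exact congrArg _ (funext fun j => (hf j).eq)

lemma sum_smul_mul_expect_vecCons [Fintype μ] (M : Fin S.L → Matrix κ μ ℝ)
    (f : (Fin (s + 1) → Fin S.L) → Matrix μ ν ℝ) :
    ∑ j, S.Pr i j • (M j * S.expect j s (fun p => f (vecCons j p))) =
      S.expect i (s + 1) (fun q => M (S.pget q 0) * f q) := by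
  rw [expect_succ]
  refine Finset.sum_congr rfl fun j _ => ?_
  rw [mul_expect]
  simp only [pget_vecCons_zero]

end Expect

lemma Aprod_succ {s : ℕ} (j : Fin s → Fin S.L) (a c : ℕ) :
    S.Aprod j a (c + 1) = S.Aprod j (a + 1) c * S.A (S.pget j a) := by
  rw [Aprod, Aprod, List.range_succ, List.map_append, List.prod_append, List.map_singleton,
    List.prod_singleton, show a + (c + 1) - 1 - c = a by omega]
  congr 2
  refine List.map_congr_left fun t _ => ?_
  rw [show a + (c + 1) - 1 - t = a + 1 + c - 1 - t by omega]

lemma Aprod_zero_left {s : ℕ} (j : Fin s → Fin S.L) {c : ℕ} (hc : 0 < c) :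
    S.Aprod j 0 c = S.Aprod j 1 (c - 1) * S.A (S.pget j 0) := by
  obtain ⟨c, rfl⟩ := Nat.exists_eq_add_of_lt hc
  rw [zero_add, Nat.add_sub_cancel, Aprod_succ]

lemma Aprod_vecCons (i : Fin S.L) {s : ℕ} (p : Fin s → Fin S.L) (a c : ℕ) :
    S.Aprod (vecCons i p) (a + 1) c = S.Aprod p a c := by
  rw [Aprod, Aprod]
  congr 1
  refine List.map_congr_left fun t ht => ?_
  rw [List.mem_range] at ht
  rw [Aget, Aget, show a + 1 + c - 1 - t = a + c - 1 - t + 1 by omega, pget_vecCons_succ]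

lemma transpose_Aprod_vecCons (i : Fin S.L) {s : ℕ} (p : Fin s → Fin S.L) (c : ℕ) :
    (S.Aprod (vecCons i p) 1 (c + 1))ᵀ = (S.A (S.pget p 0))ᵀ * (S.Aprod p 1 c)ᵀ := by
  rw [Aprod_vecCons, Aprod_succ, transpose_mul]

end MJParams

noncomputable section

namespace CDRE

variable {S : MJParams} {N : ℤ} (c : CDRE S N)

def SymmAt (u : ℤ) : Prop :=
  (∀ i, u ≤ N → (c.P i u).IsSymm) ∧ (∀ i, u ≤ N → (c.P0 i u).IsSymm) ∧
    (∀ i, u ≤ N - S.d → (c.W i u).IsSymm)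

variable {c}

lemma isSymm_W_of_forall_gt {u : ℤ} (hu : 0 ≤ u) (huN : u ≤ N - S.d)
    (h : ∀ v, u < v → c.SymmAt v) (i : Fin S.L) : (c.W i u).IsSymm := by
  have hd := S.hd
  have hrec := c.hW i (u + S.d) (by omega) (by omega)
  rw [add_sub_cancel_right] at hrec
  have hPd := h (u + S.d) (by omega)
  rw [hrec]
  refine (S.isSymm_expect _ fun j => ?_).sub
    (isSymm_sum _ fun s hs => S.isSymm_expect _ fun j => ?_)
  · exact (isSymm_transpose_mul_mul ((hPd.1 _ (by omega)).sub (hPd.2.1 _ (by omega))) _).add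
      S.hRsymm
  · rw [Finset.mem_Icc] at hs
    by_cases hv : u + S.d - s ≤ N - S.d
    · exact isSymm_transpose_mul_mul ((h _ (by omega)).2.2 _ hv).inv _
    · have hT : c.T s (S.pget j (S.d - s - 1)) (u + S.d - s) = 0 := by
        simpa using c.hTterm s hs.1 hs.2 _ (N - (u + S.d - s)) (by omega) (by omega)
      simp only [hT, transpose_zero, Matrix.zero_mul, Matrix.mul_zero]
      exact isSymm_zero

lemma isSymm_P0_of_isSymm_W {u : ℤ} (hu : 0 ≤ u) (huN : u ≤ N) (i : Fin S.L)
    (hW : u ≤ N - S.d → (c.W i u).IsSymm) : (c.P0 i u).IsSymm := by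
  have hd := S.hd
  by_cases hv : u ≤ N - S.d
  · have hrec := c.hP0 i (u + 1) (by omega) (by omega)
    rw [add_sub_cancel_right] at hrec
    rw [hrec]
    exact isSymm_transpose_mul_mul (hW hv).inv _
  · have h0 := c.hP0term i (N - u) (by omega) (by omega)
    rw [sub_sub_cancel] at h0
    rw [h0]
    exact isSymm_zero

lemma isSymm_P_of_symmAt_add_one {u : ℤ} (hu : 0 ≤ u) (huN : u ≤ N) (i : Fin S.L)
    (h : c.SymmAt (u + 1)) : (c.P i u).IsSymm := by
  rcases huN.lt_or_eq with hlt | rfl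
  · have hrec := c.hP i (u + 1) (by omega) (by omega)
    rw [add_sub_cancel_right] at hrec
    rw [hrec]
    exact isSymm_sum _ fun j _ => (S.hQsymm.add (isSymm_transpose_mul_mul
      ((h.1 j (by omega)).sub (h.2.1 j (by omega))) _)).smul _
  · rw [c.hPterm i]
    exact isSymm_zero

lemma symmAt_of_forall_gt {u : ℤ} (hu : 0 ≤ u) (h : ∀ v, u < v → c.SymmAt v) : c.SymmAt u :=
  have hW := fun huN => isSymm_W_of_forall_gt hu huN h
  ⟨fun i huN => isSymm_P_of_symmAt_add_one hu huN i (h _ (by omega)),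
    fun i huN => isSymm_P0_of_isSymm_W hu huN i (hW · i), fun i huN => hW huN i⟩

variable (c)

theorem symmAt {u : ℤ} (hu : 0 ≤ u) : c.SymmAt u := by
  suffices h : ∀ n : ℕ, ∀ v, N + 1 - n ≤ v → 0 ≤ v → c.SymmAt v from
    h (N + 1 - u).toNat u (by omega) hu
  intro n
  induction n with
  | zero =>
    intro v hv _
    have hd := S.hd
    exact ⟨fun _ h => by omega, fun _ h => by omega, fun _ h => by omega⟩
  | succ n ih =>
    intro v hv hv0
    rcases (show N + 1 - n ≤ v ∨ v = N - n by omega) with hv' | rfl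
    · exact ih v hv' hv0
    · exact symmAt_of_forall_gt hv0 fun w hw => ih w (by omega) (by omega)

lemma isSymm_P_sub_P0 {u : ℤ} (hu : 0 ≤ u) (huN : u ≤ N) (i : Fin S.L) :
    (c.P i u - c.P0 i u).IsSymm :=
  ((c.symmAt hu).1 i huN).sub ((c.symmAt hu).2.1 i huN)

def gain (r : ℕ) (i : Fin S.L) (t : ℤ) : Matrix (Fin S.n) (Fin S.m) ℝ :=
  (c.T0 i t)ᵀ * (c.W i t)⁻¹ * c.T r i t

lemma transpose_gain (r : ℕ) (i : Fin S.L) {u : ℤ} (hu : 0 ≤ u) (huN : u ≤ N) :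
    ((c.T r i u)ᵀ * (c.W i u)⁻¹ * c.T0 i u)ᵀ = c.gain r i u := by
  have hd := S.hd
  by_cases hv : u ≤ N - S.d
  · rw [gain, transpose_mul, transpose_mul, transpose_transpose, transpose_nonsing_inv,
      ((c.symmAt hu).2.2 i hv).eq, Matrix.mul_assoc]
  · have h0 := c.hT0term i (N - u) (by omega) (by omega)
    rw [sub_sub_cancel] at h0
    simp [gain, h0]

def leadTerm (r : ℕ) (q : Fin (r + 1) → Fin S.L) (t : ℤ) : Matrix (Fin S.n) (Fin S.m) ℝ :=
  (S.Aprod q 1 r)ᵀ * (c.P (S.pget q r) t - c.P0 (S.pget q r) t) * S.B (S.pget q r)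

def gainTerm (r s : ℕ) (q : Fin (s + 1) → Fin S.L) (t : ℤ) : Matrix (Fin S.n) (Fin S.m) ℝ :=
  (S.Aprod q 1 s)ᵀ * c.gain (r - s) (S.pget q s) t

lemma leadTerm_vecCons (r : ℕ) (i : Fin S.L) (q : Fin (r + 1) → Fin S.L) (t : ℤ) :
    c.leadTerm (r + 1) (vecCons i q) t = (S.A (S.pget q 0))ᵀ * c.leadTerm r q t := by
  rw [leadTerm, leadTerm, S.transpose_Aprod_vecCons, S.pget_vecCons_succ, Matrix.mul_assoc,
    Matrix.mul_assoc, Matrix.mul_assoc]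

lemma gainTerm_vecCons (r s : ℕ) (i : Fin S.L) (q : Fin (s + 1) → Fin S.L) (t : ℤ) :
    c.gainTerm (r + 1) (s + 1) (vecCons i q) t = (S.A (S.pget q 0))ᵀ * c.gainTerm r s q t := by
  rw [gainTerm, gainTerm, S.transpose_Aprod_vecCons, S.pget_vecCons_succ, Nat.add_sub_add_right,
    Matrix.mul_assoc]

/-- The closed form of `δ_i^r(t)ᵀ`, obtained by unrolling its recursion along mode paths
started at `i`; `vecCons i j` is the path `j` with its starting mode `i` prepended. -/
def deltaExpansion (r : ℕ) (i : Fin S.L) (t : ℤ) : Matrix (Fin S.n) (Fin S.m) ℝ :=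
  S.expect i r (fun j => c.leadTerm r (vecCons i j) (t + r))
    - ∑ s ∈ Finset.range r, S.expect i s (fun j => c.gainTerm r s (vecCons i j) (t + s))

lemma deltaExpansion_zero (i : Fin S.L) (t : ℤ) :
    c.deltaExpansion 0 i t = (c.P i t - c.P0 i t) * S.B i := by
  simp [deltaExpansion, leadTerm, S.expect_zero, S.pget_vecCons_zero, MJParams.Aprod]

lemma sum_smul_mul_deltaExpansion {κ : Type*} (M : Fin S.L → Matrix κ (Fin S.n) ℝ) (r : ℕ)
    (i : Fin S.L) (t : ℤ) :
    ∑ j, S.Pr i j • (M j * c.deltaExpansion r j t) =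
      S.expect i (r + 1) (fun q => M (S.pget q 0) * c.leadTerm r q (t + r))
        - ∑ s ∈ Finset.range r,
            S.expect i (s + 1) (fun q => M (S.pget q 0) * c.gainTerm r s q (t + s)) := by
  simp only [deltaExpansion, Matrix.mul_sub, smul_sub, Finset.sum_sub_distrib, Matrix.mul_sum]
  simp_rw [Finset.smul_sum]
  rw [Finset.sum_comm]
  congr 1
  · exact S.sum_smul_mul_expect_vecCons i M (fun q => c.leadTerm r q (t + r))
  · exact Finset.sum_congr rfl fun s _ =>
      S.sum_smul_mul_expect_vecCons i M (fun q => c.gainTerm r s q (t + s))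

lemma deltaExpansion_succ (r : ℕ) (i : Fin S.L) (t : ℤ) :
    c.deltaExpansion (r + 1) i t =
      ∑ j, S.Pr i j • ((S.A j)ᵀ * c.deltaExpansion r j (t + 1)) - c.gain (r + 1) i t := by
  rw [sum_smul_mul_deltaExpansion, deltaExpansion, Finset.sum_range_succ', sub_add_eq_sub_sub]
  congr 1
  · congr 1
    · refine congrArg _ (funext fun q => ?_)
      rw [leadTerm_vecCons, Nat.cast_succ, add_comm (r : ℤ), add_assoc]
    · refine Finset.sum_congr rfl fun s _ => congrArg _ (funext fun q => ?_)
      rw [gainTerm_vecCons, Nat.cast_succ, add_comm (s : ℤ), add_assoc]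
  · simp [gainTerm, S.expect_zero, S.pget_vecCons_zero, MJParams.Aprod]

/-- The right-hand sides of the recursions for `T⁰` (with `C = A`) and `T¹` (with `C = B`) have
this shape. -/
theorem transpose_expansion_eq_sum {ι : Type*} [Fintype ι] (C : Fin S.L → Matrix (Fin S.n) ι ℝ)
    (i : Fin S.L) {k : ℤ} (hk : 0 ≤ k) (hkN : k + (S.d - 1 : ℕ) ≤ N) :
    (S.expect i S.d (fun j =>
        (S.Bget j (S.d - 1))ᵀ *
          (c.P (S.pget j (S.d - 1)) (k - 1 + S.d) - c.P0 (S.pget j (S.d - 1)) (k - 1 + S.d)) *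
          (S.Aprod j 1 (S.d - 1) * C (S.pget j 0)))
      - ∑ s ∈ Finset.Icc 1 (S.d - 1),
          S.expect i (S.d - s) (fun j =>
            (c.T s (S.pget j (S.d - s - 1)) (k - 1 + S.d - s))ᵀ *
              (c.W (S.pget j (S.d - s - 1)) (k - 1 + S.d - s))⁻¹ *
              c.T0 (S.pget j (S.d - s - 1)) (k - 1 + S.d - s) *
              (S.Aprod j 1 (S.d - s - 1) * C (S.pget j 0))))ᵀ =
      ∑ j, S.Pr i j • ((C j)ᵀ * c.deltaExpansion (S.d - 1) j k) := by
  obtain ⟨r, hr⟩ : ∃ r, S.d = r + 1 := ⟨S.d - 1, (Nat.succ_pred_eq_of_pos S.hd).symm⟩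
  rw [hr, Nat.add_sub_cancel] at hkN ⊢
  rw [sum_smul_mul_deltaExpansion, transpose_sub, transpose_sum,
    Finset.sum_Icc_one_eq_sum_range_sub]
  congr 1
  · rw [S.transpose_expect]
    refine congrArg _ (funext fun j => ?_)
    rw [leadTerm, MJParams.Bget, transpose_mul, transpose_mul, transpose_mul, transpose_transpose,
      (c.isSymm_P_sub_P0 (by omega) (by omega) _).eq, show k - 1 + ((r + 1 : ℕ) : ℤ) = k + r by
        push_cast; ring]
    simp only [Matrix.mul_assoc]
  · refine Finset.sum_congr rfl fun s hs => ?_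
    rw [Finset.mem_range] at hs
    rw [show r + 1 - (r - s) = s + 1 by omega, Nat.add_sub_cancel,
      show k - 1 + ((r + 1 : ℕ) : ℤ) - ((r - s : ℕ) : ℤ) = k + s by omega, S.transpose_expect]
    refine congrArg _ (funext fun j => ?_)
    rw [gainTerm, transpose_mul, transpose_mul,
      c.transpose_gain _ _ (by omega) (by omega)]
    simp only [Matrix.mul_assoc]

theorem transpose_T0 (i : Fin S.L) {k : ℤ} (hk : 0 ≤ k) (hkN : k ≤ N - S.d + 1) :
    (c.T0 i (k - 1))ᵀ = ∑ j, S.Pr i j • ((S.A j)ᵀ * c.deltaExpansion (S.d - 1) j k) := by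
  have hd := S.hd
  have hrec := c.hT0 i (k - 1 + S.d) (by omega) (by omega)
  rw [add_sub_cancel_right] at hrec
  rw [hrec, ← c.transpose_expansion_eq_sum S.A i hk (by omega)]
  congr 2
  · exact congrArg _ (funext fun j => by rw [S.Aprod_zero_left j hd])
  · refine Finset.sum_congr rfl fun s hs => congrArg _ (funext fun j => ?_)
    rw [Finset.mem_Icc] at hs
    rw [S.Aprod_zero_left j (by omega : 0 < S.d - s)]

theorem transpose_T1 (hd2 : 2 ≤ S.d) (i : Fin S.L) {k : ℤ} (hk : 0 ≤ k)
    (hkN : k ≤ N - S.d + 1) :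
    (c.T 1 i (k - 1))ᵀ = ∑ j, S.Pr i j • ((S.B j)ᵀ * c.deltaExpansion (S.d - 1) j k) := by
  have hrec := c.hT 1 le_rfl (by omega) i (k - 1 + S.d) (by omega) (by omega)
  rw [add_sub_cancel_right, Finset.Icc_eq_empty (show ¬S.d - 1 + 1 ≤ S.d - 1 by omega),
    Finset.sum_empty, sub_zero] at hrec
  rw [hrec]
  exact c.transpose_expansion_eq_sum S.B i hk (by omega)

end CDRE

theorem CDREX.transpose_delta {S : MJParams} {N : ℤ} (c : CDREX S N) {r : ℕ} (hr : 1 ≤ r)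
    (hrd : r ≤ S.d - 1) (i : Fin S.L) {t : ℤ} (ht : -1 ≤ t) (htN : t + r ≤ N) :
    (c.δ r i t)ᵀ = c.deltaExpansion r i t := by
  induction r, hr using Nat.le_induction generalizing i t with
  | base =>
    have h := c.hδ1 hrd i (t + 1) (by omega) (by omega)
    rw [add_sub_cancel_right] at h
    simp only [h, c.deltaExpansion_succ, c.deltaExpansion_zero, CDRE.gain, zero_add,
      Matrix.mul_assoc]
  | succ r hr ih =>
    have h := c.hδr (r + 1) (by omega) hrd i (t + 1) (by omega) (by omega)
    rw [add_sub_cancel_right, Nat.add_sub_cancel] at h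
    rw [h, c.deltaExpansion_succ]
    congr 1
    exact Finset.sum_congr rfl fun j _ => by
      rw [ih (by omega) j (by omega) (by push_cast at htN; omega)]

end

theorem stmt13_general (S : MJParams) (hd2 : 2 ≤ S.d)
    (N : ℤ) (c : CDREX S N) (i : Fin S.L)
    (k : ℤ) (hk0 : 0 ≤ k) (hkN : k ≤ N - S.d + 1) :
    (∑ j, S.Pr i j • ((S.A j)ᵀ * (c.α 1 (fun _ => j) k)ᵀ)) = (c.T0 i (k - 1))ᵀ ∧
    (∑ j, S.Pr i j • ((S.B j)ᵀ * (c.α 1 (fun _ => j) k)ᵀ)) = (c.T 1 i (k - 1))ᵀ := by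
  have hα : ∀ j, (c.α 1 (fun _ => j) k)ᵀ = c.deltaExpansion (S.d - 1) j k := fun j => by
    rw [c.hα1 (by omega), c.transpose_delta (by omega) le_rfl j (by omega) (by omega)]
  simp only [hα]
  exact ⟨(c.transpose_T0 i hk0 hkN).symm, (c.transpose_T1 hd2 i hk0 hkN).symm⟩

theorem stmt13 (S : MJParams) (hd2 : 2 ≤ S.d) (hR : S.R.PosDef) (hQ : S.Q.PosSemidef)
    (N : ℤ) (hN : (S.d : ℤ) ≤ N) (c : CDREX S N) (i : Fin S.L)
    (k : ℤ) (hk0 : 0 ≤ k) (hkN : k ≤ N - S.d + 1) :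
    (∑ j, S.Pr i j • ((S.A j)ᵀ * (c.α 1 (fun _ => j) k)ᵀ)) = (c.T0 i (k - 1))ᵀ ∧
    (∑ j, S.Pr i j • ((S.B j)ᵀ * (c.α 1 (fun _ => j) k)ᵀ)) = (c.T 1 i (k - 1))ᵀ :=
  stmt13_general S hd2 N c i k hk0 hkN
end

section
/- Assume R is positive definite and Q is positive semidefinite, and suppose the CARE admits a solution with every W_i positive definite. Then, for every G_k-adapted input process and every k ≥ d, the Lyapunov functional satisfies the sandwich bounds E[x(k)′ Ω_{(θ(k−1), θ(k−2), …, θ(k−d))} x(k)] ≤ V(k) ≤ E[x(k)′ P_{θ(k−1)} x(k)]; in particular, if E[x(k)′x(k)] → 0 as k → ∞ then V(k) → 0. -/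
open MeasureTheory Filter Matrix Topology
open scoped ENNReal

/-!
The upper bound holds because every conditional term subtracted in `V(k)` is a `W⁻¹`-quadratic
form, hence nonnegative, and because `P⁰ ⪰ 0`. For the lower bound, `x′Ωx` splits into the same
leading term minus the unconditioned forms `(αx)′W⁻¹(αx)`. The weight `W⁻¹_{θ(k-s-1)}` is known at
time `k-s-1`, so conditional Jensen for the convex form `v ↦ v′W⁻¹v`, applied on each fibre
`{θ(k-s-1) = i}`, shows that conditioning on `G_{k-s-1}` can only decrease these terms.
Integrability comes for free: `G_k` is generated by finitely many finitely valued variables, so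
every `G_k`-measurable function takes finitely many values. Both bounds are `O(E‖x(k)‖²)`, which
gives the limit.
-/
theorem Matrix.PosSemidef.convexOn_dotProduct_mulVec {q : ℕ} {D : Matrix (Fin q) (Fin q) ℝ}
    (hD : D.PosSemidef) : ConvexOn ℝ Set.univ fun v => v ⬝ᵥ D *ᵥ v := by
  refine ⟨convex_univ, fun x _ y _ a b ha hb hab => ?_⟩
  have hsymm : y ⬝ᵥ D *ᵥ x = x ⬝ᵥ D *ᵥ y := by
    rw [dotProduct_mulVec, ← mulVec_transpose, dotProduct_comm,
      show Dᵀ = D from hD.isHermitian]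
  have hnonneg : 0 ≤ (x - y) ⬝ᵥ D *ᵥ (x - y) := by simpa using hD.dotProduct_mulVec_nonneg (x - y)
  simp only [mulVec_add, mulVec_smul, mulVec_sub, dotProduct_add, add_dotProduct, dotProduct_smul,
    smul_dotProduct, dotProduct_sub, sub_dotProduct, smul_eq_mul] at hnonneg ⊢
  rw [hsymm] at hnonneg ⊢
  obtain rfl : b = 1 - a := by linarith
  nlinarith [mul_nonneg ha hb]

theorem abs_dotProduct_mulVec_le {q : ℕ} (N : Matrix (Fin q) (Fin q) ℝ) (x : Fin q → ℝ) :
    |x ⬝ᵥ N *ᵥ x| ≤ (∑ a, ∑ b, |N a b|) * ∑ i, x i ^ 2 := by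
  have hpair : ∀ a b, |x a| * |x b| ≤ ∑ i, x i ^ 2 := fun a b => by
    have ha := Finset.single_le_sum (fun i _ => sq_nonneg (x i)) (Finset.mem_univ a)
    have hb := Finset.single_le_sum (fun i _ => sq_nonneg (x i)) (Finset.mem_univ b)
    nlinarith [sq_abs (x a), sq_abs (x b), sq_nonneg (|x a| - |x b|)]
  calc |x ⬝ᵥ N *ᵥ x| = |∑ a, ∑ b, x a * (N a b * x b)| := by
        simp only [dotProduct, mulVec, Finset.mul_sum]
    _ ≤ ∑ a, ∑ b, |N a b| * (|x a| * |x b|) := by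
        refine (Finset.abs_sum_le_sum_abs _ _).trans (Finset.sum_le_sum fun a _ => ?_)
        refine (Finset.abs_sum_le_sum_abs _ _).trans_eq (Finset.sum_congr rfl fun b _ => ?_)
        rw [abs_mul, abs_mul]
        ring
    _ ≤ ∑ a, ∑ b, |N a b| * ∑ i, x i ^ 2 := by gcongr with a _ b _; exact hpair a b
    _ = (∑ a, ∑ b, |N a b|) * ∑ i, x i ^ 2 := by simp only [Finset.sum_mul]

theorem exists_abs_dotProduct_mulVec_le {ι : Type*} [Fintype ι] {q : ℕ}
    (N : ι → Matrix (Fin q) (Fin q) ℝ) :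
    ∃ C, ∀ i x, |x ⬝ᵥ N i *ᵥ x| ≤ C * ∑ j, x j ^ 2 :=
  ⟨∑ i, ∑ a, ∑ b, |N i a b|, fun i x => (abs_dotProduct_mulVec_le (N i) x).trans <|
    mul_le_mul_of_nonneg_right
      (Finset.single_le_sum (f := fun i => ∑ a, ∑ b, |N i a b|) (fun _ _ => by positivity)
        (Finset.mem_univ i))
      (by positivity)⟩

section FiniteIndex

variable {Ω ι E : Type*} {_ : MeasurableSpace Ω} {μ : Measure Ω} [Fintype ι]

theorem apply_eq_sum_indicator_preimage [AddCommMonoid E] (τ : Ω → ι) (F : ι → Ω → E) (ω : Ω) :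
    F (τ ω) ω = ∑ i, (τ ⁻¹' {i}).indicator (F i) ω := by
  classical
  simp [Set.indicator_apply]

variable [MeasurableSpace ι] [MeasurableSingletonClass ι] [NormedAddCommGroup E]
  {τ : Ω → ι} {F : ι → Ω → E}

theorem integrable_apply_of_fintype (hτ : Measurable τ) (hF : ∀ i, Integrable (F i) μ) :
    Integrable (fun ω => F (τ ω) ω) μ := by
  simp_rw [apply_eq_sum_indicator_preimage τ F]
  exact integrable_finsetSum _ fun i _ => (hF i).indicator (hτ (measurableSet_singleton i))

theorem integral_apply_eq_sum_setIntegral [NormedSpace ℝ E] (hτ : Measurable τ)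
    (hF : ∀ i, Integrable (F i) μ) :
    ∫ ω, F (τ ω) ω ∂μ = ∑ i, ∫ ω in τ ⁻¹' {i}, F i ω ∂μ := by
  simp_rw [apply_eq_sum_indicator_preimage τ F]
  rw [integral_finsetSum _ fun i _ => (hF i).indicator (hτ (measurableSet_singleton i))]
  exact Finset.sum_congr rfl fun i _ => integral_indicator (hτ (measurableSet_singleton i))

end FiniteIndex

theorem integral_condExp_dotProduct_mulVec_le {Ω ι : Type*} {m m0 : MeasurableSpace Ω}
    {μ : Measure Ω} [IsFiniteMeasure μ] [Fintype ι] [MeasurableSpace ι]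
    [MeasurableSingletonClass ι] (hm : m ≤ m0) {q : ℕ} {D : ι → Matrix (Fin q) (Fin q) ℝ}
    (hD : ∀ i, (D i).PosSemidef) {τ : Ω → ι} (hτ : Measurable[m] τ) {f : Ω → Fin q → ℝ}
    (hf : Integrable f μ) (hDf : ∀ i, Integrable (fun ω => f ω ⬝ᵥ D i *ᵥ f ω) μ) :
    ∫ ω, μ[f|m] ω ⬝ᵥ D (τ ω) *ᵥ μ[f|m] ω ∂μ ≤ ∫ ω, f ω ⬝ᵥ D (τ ω) *ᵥ f ω ∂μ := by
  set F : ι → Ω → ℝ := fun i ω => f ω ⬝ᵥ D i *ᵥ f ω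
  have hτ0 : Measurable τ := hτ.mono hm le_rfl
  have hjensen : ∀ᵐ ω ∂μ, ∀ i, μ[f|m] ω ⬝ᵥ D i *ᵥ μ[f|m] ω ≤ μ[F i|m] ω :=
    ae_all_iff.2 fun i => (hD i).convexOn_dotProduct_mulVec.map_condExp_le hm
      ((by fun_prop : Continuous fun v => v ⬝ᵥ D i *ᵥ v).lowerSemicontinuous.lowerSemicontinuousOn
        _)
      (ae_of_all _ fun _ => Set.mem_univ _) isClosed_univ hf (hDf i)
  calc ∫ ω, μ[f|m] ω ⬝ᵥ D (τ ω) *ᵥ μ[f|m] ω ∂μ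
      ≤ ∫ ω, μ[F (τ ω)|m] ω ∂μ :=
        integral_mono_of_nonneg
          (ae_of_all _ fun ω => by simpa using (hD (τ ω)).dotProduct_mulVec_nonneg (μ[f|m] ω))
          (integrable_apply_of_fintype (F := fun i => μ[F i|m]) hτ0 fun i => integrable_condExp)
          (hjensen.mono fun ω h => h (τ ω))
    _ = ∑ i, ∫ ω in τ ⁻¹' {i}, μ[F i|m] ω ∂μ :=
        integral_apply_eq_sum_setIntegral (F := fun i => μ[F i|m]) hτ0 fun i => integrable_condExp
    _ = ∑ i, ∫ ω in τ ⁻¹' {i}, F i ω ∂μ :=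
        Finset.sum_congr rfl fun i _ =>
          setIntegral_condExp hm (hDf i) (hτ (measurableSet_singleton i))
    _ = ∫ ω, F (τ ω) ω ∂μ := (integral_apply_eq_sum_setIntegral hτ0 hDf).symm

theorem measurable_family_apply_of_countable {Ω ι V W : Type*} {_ : MeasurableSpace Ω}
    [Countable ι] [MeasurableSpace ι] [MeasurableSingletonClass ι] [MeasurableSpace V]
    [MeasurableSpace W] {Φ : ι → V → W} (hΦ : ∀ i, Measurable (Φ i)) {τ : Ω → ι}
    (hτ : Measurable τ) {v : Ω → V} (hv : Measurable v) :
    Measurable fun ω => Φ (τ ω) (v ω) :=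
  (measurable_from_prod_countable_left (f := fun p : V × ι => Φ p.2 p.1) hΦ).comp (hv.prodMk hτ)

namespace CARE

variable {S : MJParams} (c : CARE S)

theorem posSemidef_P0 (hW : ∀ i, (c.W i).PosDef) (i : Fin S.L) : (c.P0 i).PosSemidef := by
  rw [c.hP0 i]
  simpa using (hW i).inv.posSemidef.conjTranspose_mul_mul_same (c.T0 i)

theorem dotProduct_Omega_mulVec (z : ℕ → Fin S.L) (x : Fin S.n → ℝ) :
    x ⬝ᵥ c.Omega (fun t : Fin S.d => z t) *ᵥ x = x ⬝ᵥ (c.P (z 0) - c.P0 (z 0)) *ᵥ x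
      - ∑ s ∈ Finset.Icc 1 (S.d - 1), (c.α s (fun t : Fin s => z t) *ᵥ x) ⬝ᵥ
          (c.W (z s))⁻¹ *ᵥ (c.α s (fun t : Fin s => z t) *ᵥ x) := by
  have hpget : ∀ s < S.d, S.pget (fun t : Fin S.d => z t) s = z s := fun s hs => by
    simp [MJParams.pget, hs]
  rw [CARE.Omega, sub_mulVec, dotProduct_sub, sum_mulVec, dotProduct_sum, hpget 0 S.hd]
  congr 1
  refine Finset.sum_congr rfl fun s hs => ?_
  have hsd : s < S.d := by have := Finset.mem_Icc.1 hs; omega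
  have hpath : (fun r : Fin s => S.pget (fun t : Fin S.d => z t) r) = fun t : Fin s => z t :=
    funext fun r => hpget r (by omega)
  rw [hpget s hsd, hpath, ← mulVec_mulVec, ← mulVec_mulVec, dotProduct_mulVec, vecMul_transpose]

end CARE

namespace MarkovChain

variable {S : MJParams} {Ω : Type} [mΩ : MeasurableSpace Ω] (M : MarkovChain S Ω)

theorem G_le (k : ℕ) : M.G k ≤ mΩ :=
  iSup₂_le fun t _ => (M.hθ t).comap_le

theorem measurable_θ {t k : ℕ} (h : t ≤ k) : Measurable[M.G k] (M.θ t) :=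
  Measurable.of_comap_le <| le_iSup₂ (f := fun t (_ : t ∈ Finset.range (k + 1)) =>
    MeasurableSpace.comap (M.θ t) ⊤) t (Finset.mem_range.2 (Nat.lt_succ_of_le h))

theorem G_mono : Monotone M.G := fun _ _ hjk =>
  iSup₂_le fun _ ht => (M.measurable_θ ((Finset.mem_range_succ_iff.1 ht).trans hjk)).comap_le

theorem finite_range_of_measurable_G {E : Type*} [MeasurableSpace E] [MeasurableSingletonClass E]
    {k : ℕ} {F : Ω → E} (hF : Measurable[M.G k] F) : (Set.range F).Finite := by
  let T : Ω → (Fin (k + 1) → Fin S.L) := fun ω t => M.θ t ω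
  have hle : M.G k ≤ MeasurableSpace.comap T inferInstance := iSup₂_le fun t ht =>
    ((measurable_pi_apply (⟨t, Finset.mem_range.1 ht⟩ : Fin (k + 1))).comp
      (comap_measurable T)).comap_le
  rcases isEmpty_or_nonempty Ω with _ | ⟨⟨ω₀⟩⟩
  · simp [Set.range_eq_empty]
  rw [← (hF.mono hle le_rfl).factorsThrough.extend_comp (fun _ => F ω₀)]
  exact (Set.finite_range _).subset (Set.range_comp_subset_range _ _)

theorem integrable_of_measurable_G {E : Type*} [NormedAddCommGroup E] [MeasurableSpace E]
    [BorelSpace E] [SecondCountableTopology E] {k : ℕ} {F : Ω → E}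
    (hF : Measurable[M.G k] F) : Integrable F M.μ := by
  have := M.hμ
  obtain ⟨C, hC⟩ := ((M.finite_range_of_measurable_G hF).image norm).bddAbove
  exact Integrable.of_bound (hF.mono (M.G_le k) le_rfl).aestronglyMeasurable C
    (ae_of_all _ fun ω => hC ⟨F ω, ⟨ω, rfl⟩, rfl⟩)

variable {x0 : Fin S.n → ℝ} {uinit : ℤ → Fin S.m → ℝ} {u : ℤ → Ω → Fin S.m → ℝ}

theorem measurable_traj (hinit : HasInit S M uinit u)
    (hu : ∀ k : ℕ, Measurable[M.G k] (u (k : ℤ))) (k : ℕ) :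
    Measurable[M.G k] (traj S M x0 u k) := by
  induction k with
  | zero => exact measurable_const
  | succ k ih =>
    have hθ := M.measurable_θ (Nat.le_succ k)
    have hinput : Measurable[M.G (k + 1)] (u ((k : ℤ) - S.d)) := by
      rcases lt_or_ge ((k : ℤ) - S.d) 0 with hneg | hnonneg
      · rw [hinit _ (by omega) hneg]
        exact measurable_const
      · obtain ⟨j, hj⟩ := Int.eq_ofNat_of_zero_le hnonneg
        rw [hj]
        exact (hu j).mono (M.G_mono (by omega)) le_rfl
    have hstate := ih.mono (M.G_mono (Nat.le_succ k)) le_rfl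
    exact Measurable.add
      (measurable_family_apply_of_countable (Φ := fun i v => S.A i *ᵥ v)
        (fun i => (by fun_prop : Continuous fun v => S.A i *ᵥ v).measurable) hθ hstate)
      (measurable_family_apply_of_countable (Φ := fun i v => S.B i *ᵥ v)
        (fun i => (by fun_prop : Continuous fun v => S.B i *ᵥ v).measurable) hθ hinput)

theorem measurable_backwardPath (k s : ℕ) :
    Measurable[M.G k] fun ω (t : Fin s) => M.θ (k - 1 - t) ω :=
  @measurable_pi_lambda Ω (Fin s) (fun _ => Fin S.L) (M.G k) _ _ fun _ => M.measurable_θ (by omega)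

theorem integrable_dotProduct_mulVec {ι : Type*} [Countable ι] [MeasurableSpace ι]
    [MeasurableSingletonClass ι] {q k : ℕ} (N : ι → Matrix (Fin q) (Fin q) ℝ) {τ : Ω → ι}
    (hτ : Measurable[M.G k] τ) {v : Ω → Fin q → ℝ} (hv : Measurable[M.G k] v) :
    Integrable (fun ω => v ω ⬝ᵥ N (τ ω) *ᵥ v ω) M.μ :=
  M.integrable_of_measurable_G <| measurable_family_apply_of_countable
    (Φ := fun i v => v ⬝ᵥ N i *ᵥ v) (fun i => (by fun_prop : Continuous _).measurable) hτ hv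

variable (c : CARE S)

theorem integral_Omega_le_Vfun (hW : ∀ i, (c.W i).PosDef) (hinit : HasInit S M uinit u)
    (hu : ∀ k : ℕ, Measurable[M.G k] (u (k : ℤ))) (k : ℕ) :
    ∫ ω, traj S M x0 u k ω ⬝ᵥ
        (c.Omega fun t : Fin S.d => M.θ (k - 1 - t) ω) *ᵥ traj S M x0 u k ω ∂M.μ
      ≤ Vfun S M c x0 u k := by
  have := M.hμ
  set x := traj S M x0 u k
  have hx : Measurable[M.G k] x := M.measurable_traj hinit hu k
  set f : (s : ℕ) → Ω → Fin S.m → ℝ := fun s ω =>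
    c.α s (fun t : Fin s => M.θ (k - 1 - t) ω) *ᵥ x ω
  have hf : ∀ s, Measurable[M.G k] (f s) := fun s =>
    measurable_family_apply_of_countable (Φ := fun p v => c.α s p *ᵥ v)
      (fun _ => (by fun_prop : Continuous _).measurable) (M.measurable_backwardPath k s) hx
  have hWinv : ∀ i, ((c.W i)⁻¹).PosSemidef := fun i => (hW i).inv.posSemidef
  have hpoint : ∀ ω, x ω ⬝ᵥ (c.Omega fun t : Fin S.d => M.θ (k - 1 - t) ω) *ᵥ x ω
      = x ω ⬝ᵥ (c.P (M.θ (k - 1) ω) - c.P0 (M.θ (k - 1) ω)) *ᵥ x ω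
        - ∑ s ∈ Finset.Icc 1 (S.d - 1), f s ω ⬝ᵥ (c.W (M.θ (k - s - 1) ω))⁻¹ *ᵥ f s ω := fun ω => by
    refine (c.dotProduct_Omega_mulVec (fun j => M.θ (k - 1 - j) ω) (x ω)).trans ?_
    rw [Nat.sub_zero]
    refine congrArg _ (Finset.sum_congr rfl fun s _ => ?_)
    rw [Nat.sub_right_comm k 1 s]
  have hquad : ∀ s, Integrable (fun ω => f s ω ⬝ᵥ (c.W (M.θ (k - s - 1) ω))⁻¹ *ᵥ f s ω) M.μ :=
    fun s => M.integrable_dotProduct_mulVec (fun i => (c.W i)⁻¹) (M.measurable_θ (by omega)) (hf s)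
  calc _ = ∫ ω, x ω ⬝ᵥ (c.P (M.θ (k - 1) ω) - c.P0 (M.θ (k - 1) ω)) *ᵥ x ω ∂M.μ
        - ∑ s ∈ Finset.Icc 1 (S.d - 1),
            ∫ ω, f s ω ⬝ᵥ (c.W (M.θ (k - s - 1) ω))⁻¹ *ᵥ f s ω ∂M.μ := by
        simp_rw [hpoint]
        rw [integral_sub (M.integrable_dotProduct_mulVec (fun i => c.P i - c.P0 i)
            (M.measurable_θ (by omega)) hx) (integrable_finsetSum _ fun s _ => hquad s),
          integral_finsetSum _ fun s _ => hquad s]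
    _ ≤ Vfun S M c x0 u k :=
        sub_le_sub_left (Finset.sum_le_sum fun s _ =>
          integral_condExp_dotProduct_mulVec_le (M.G_le _) hWinv (M.measurable_θ le_rfl)
            (M.integrable_of_measurable_G (hf s))
            fun i => M.integrable_of_measurable_G
              ((by fun_prop : Continuous fun v => v ⬝ᵥ (c.W i)⁻¹ *ᵥ v).measurable.comp (hf s))) _

theorem Vfun_le_integral_P (hW : ∀ i, (c.W i).PosDef) (hinit : HasInit S M uinit u)
    (hu : ∀ k : ℕ, Measurable[M.G k] (u (k : ℤ))) (k : ℕ) :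
    Vfun S M c x0 u k
      ≤ ∫ ω, traj S M x0 u k ω ⬝ᵥ c.P (M.θ (k - 1) ω) *ᵥ traj S M x0 u k ω ∂M.μ := by
  have hx := M.measurable_traj hinit hu k (x0 := x0)
  have hθ : Measurable[M.G k] (M.θ (k - 1)) := M.measurable_θ (by omega)
  calc Vfun S M c x0 u k
      ≤ ∫ ω, traj S M x0 u k ω ⬝ᵥ (c.P (M.θ (k - 1) ω) - c.P0 (M.θ (k - 1) ω)) *ᵥ
          traj S M x0 u k ω ∂M.μ :=
        sub_le_self _ (Finset.sum_nonneg fun s _ => integral_nonneg fun ω => by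
          simpa using (hW _).inv.posSemidef.dotProduct_mulVec_nonneg _)
    _ ≤ _ := integral_mono (M.integrable_dotProduct_mulVec (fun i => c.P i - c.P0 i) hθ hx)
        (M.integrable_dotProduct_mulVec c.P hθ hx) fun ω => by
          have := (c.posSemidef_P0 hW (M.θ (k - 1) ω)).dotProduct_mulVec_nonneg
            (traj S M x0 u k ω)
          simp only [star_trivial, sub_mulVec, dotProduct_sub] at this ⊢
          linarith

theorem abs_Vfun_le (hW : ∀ i, (c.W i).PosDef) (hinit : HasInit S M uinit u)
    (hu : ∀ k : ℕ, Measurable[M.G k] (u (k : ℤ))) {C : ℝ}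
    (hP : ∀ i x, |x ⬝ᵥ c.P i *ᵥ x| ≤ C * ∑ j, x j ^ 2)
    (hΩ : ∀ p x, |x ⬝ᵥ c.Omega p *ᵥ x| ≤ C * ∑ j, x j ^ 2) (k : ℕ) :
    |Vfun S M c x0 u k| ≤ C * ∫ ω, ∑ j, traj S M x0 u k ω j ^ 2 ∂M.μ := by
  have hx := M.measurable_traj hinit hu k (x0 := x0)
  have hsq : Integrable (fun ω => C * ∑ j, traj S M x0 u k ω j ^ 2) M.μ :=
    (M.integrable_of_measurable_G ((by fun_prop : Continuous fun v : Fin S.n → ℝ =>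
      ∑ j, v j ^ 2).measurable.comp hx)).const_mul C
  rw [abs_le, ← integral_const_mul]
  constructor
  · calc -∫ ω, C * ∑ j, traj S M x0 u k ω j ^ 2 ∂M.μ
        = ∫ ω, -(C * ∑ j, traj S M x0 u k ω j ^ 2) ∂M.μ := (integral_neg _).symm
      _ ≤ ∫ ω, traj S M x0 u k ω ⬝ᵥ
            (c.Omega fun t : Fin S.d => M.θ (k - 1 - t) ω) *ᵥ traj S M x0 u k ω ∂M.μ :=
          integral_mono hsq.neg
            (M.integrable_dotProduct_mulVec c.Omega (M.measurable_backwardPath k S.d) hx)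
            fun ω => (abs_le.1 (hΩ _ _)).1
      _ ≤ Vfun S M c x0 u k := M.integral_Omega_le_Vfun c hW hinit hu k
  · calc Vfun S M c x0 u k
        ≤ ∫ ω, traj S M x0 u k ω ⬝ᵥ c.P (M.θ (k - 1) ω) *ᵥ traj S M x0 u k ω ∂M.μ :=
          M.Vfun_le_integral_P c hW hinit hu k
      _ ≤ ∫ ω, C * ∑ j, traj S M x0 u k ω j ^ 2 ∂M.μ :=
          integral_mono (M.integrable_dotProduct_mulVec c.P (M.measurable_θ (by omega)) hx) hsq
            fun ω => (abs_le.1 (hP _ _)).2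

end MarkovChain

theorem stmt17_general (S : MJParams)
    (c : CARE S) (hW : ∀ i, (c.W i).PosDef) :
    ∀ {Ω : Type} [MeasurableSpace Ω] (M : MarkovChain S Ω)
      (x0 : Fin S.n → ℝ) (uinit : ℤ → Fin S.m → ℝ) (u : ℤ → Ω → Fin S.m → ℝ),
      HasInit S M uinit u →
      (∀ k : ℕ, Measurable[M.G k] (u (k : ℤ))) →
      (∀ k : ℕ, S.d ≤ k →
        (∫ ω, (traj S M x0 u k ω) ⬝ᵥ
            ((c.Omega (fun t : Fin S.d => M.θ (k - 1 - (t : ℕ)) ω)).mulVec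
              (traj S M x0 u k ω)) ∂M.μ) ≤ Vfun S M c x0 u k ∧
        Vfun S M c x0 u k ≤
          ∫ ω, (traj S M x0 u k ω) ⬝ᵥ
            ((c.P (M.θ (k - 1) ω)).mulVec (traj S M x0 u k ω)) ∂M.μ) ∧
      (Tendsto (fun k : ℕ => ∫ ω, (∑ i, (traj S M x0 u k ω i) ^ 2) ∂M.μ) atTop (𝓝 0) →
        Tendsto (fun k : ℕ => Vfun S M c x0 u k) atTop (𝓝 0)) := by
  intro Ω _ M x0 uinit u hinit hu
  refine ⟨fun k _ => ⟨M.integral_Omega_le_Vfun c hW hinit hu k,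
    M.Vfun_le_integral_P c hW hinit hu k⟩, fun htend => ?_⟩
  obtain ⟨C, hC⟩ := exists_abs_dotProduct_mulVec_le (Sum.elim c.P c.Omega)
  refine squeeze_zero_norm (fun k => M.abs_Vfun_le c hW hinit hu (fun i => hC (.inl i))
    (fun p => hC (.inr p)) k) ?_
  simpa using htend.const_mul C

theorem stmt17 (S : MJParams) (hR : S.R.PosDef) (hQ : S.Q.PosSemidef)
    (c : CARE S) (hW : ∀ i, (c.W i).PosDef) :
    ∀ {Ω : Type} [MeasurableSpace Ω] (M : MarkovChain S Ω)
      (x0 : Fin S.n → ℝ) (uinit : ℤ → Fin S.m → ℝ) (u : ℤ → Ω → Fin S.m → ℝ),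
      HasInit S M uinit u →
      (∀ k : ℕ, Measurable[M.G k] (u (k : ℤ))) →
      (∀ k : ℕ, S.d ≤ k →
        (∫ ω, (traj S M x0 u k ω) ⬝ᵥ
            ((c.Omega (fun t : Fin S.d => M.θ (k - 1 - (t : ℕ)) ω)).mulVec
              (traj S M x0 u k ω)) ∂M.μ) ≤ Vfun S M c x0 u k ∧
        Vfun S M c x0 u k ≤
          ∫ ω, (traj S M x0 u k ω) ⬝ᵥ
            ((c.P (M.θ (k - 1) ω)).mulVec (traj S M x0 u k ω)) ∂M.μ) ∧
      (Tendsto (fun k : ℕ => ∫ ω, (∑ i, (traj S M x0 u k ω i) ^ 2) ∂M.μ) atTop (𝓝 0) →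
        Tendsto (fun k : ℕ => Vfun S M c x0 u k) atTop (𝓝 0)) :=
  stmt17_general S c hW
end
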